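/- (Flow-error accumulation; the key intermediate identity in the proof of Lemma 1.) Assume the rooted tree setup, the phase setup, and both power-flow models of the context. Then for every non-root bus j: (a) the line-flow error equals the negative of the accumulated downstream losses, Λ̂_j^ψ − Λ_j^ψ = − m_j^ψ for every ψ ∈ Φ_j; and consequently (b) Ŝ_j − S_j = − M_j as Φ_j × Φ_j matrices. -/
import Mathlib


attribute [local instance] Classical.propDecidable

/-- `i` is an ancestor of `h`: `i` is obtained from `h` by iterating the parent map. -/
def isAnc {N : ℕ} (par : Fin (N + 1) → Fin (N + 1)) (i h : Fin (N + 1)) : Prop :=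
  ∃ n : ℕ, par^[n] h = i

/-- Lines strictly downstream of line `j`. -/
noncomputable def down {N : ℕ} (par : Fin (N + 1) → Fin (N + 1)) (j : Fin (N + 1)) :
    Finset (Fin (N + 1)) :=
  Finset.univ.filter (fun β => β ≠ 0 ∧ β ≠ j ∧ isAnc par j β)

/-- `subtree j = {j} ∪ down j`. -/
noncomputable def subtree {N : ℕ} (par : Fin (N + 1) → Fin (N + 1)) (j : Fin (N + 1)) :
    Finset (Fin (N + 1)) :=
  insert j (down par j)

/-- Children of bus `j`: non-root buses whose parent is `j`. -/
noncomputable def children {N : ℕ} (par : Fin (N + 1) → Fin (N + 1)) (j : Fin (N + 1)) :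
    Finset (Fin (N + 1)) :=
  Finset.univ.filter (fun k => k ≠ 0 ∧ par k = j)

/-- `α = exp(−2πi/3)`. -/
noncomputable def alphaPh : ℂ := Complex.exp (-(2 * Real.pi * Complex.I) / 3)

/-- Accumulated downstream loss `m_j^ψ := Σ_{β ∈ subtree(j), ψ ∈ Φ_β} (z_β ℓ_β)^{ψψ}`. -/
noncomputable def mAcc {N : ℕ} (par : Fin (N + 1) → Fin (N + 1))
    (Φ : Fin (N + 1) → Finset (Fin 3))
    (z ℓ : Fin (N + 1) → Matrix (Fin 3) (Fin 3) ℂ)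
    (j : Fin (N + 1)) (ψ : Fin 3) : ℂ :=
  ∑ β ∈ (subtree par j).filter (fun β => ψ ∈ Φ β), ∑ η ∈ Φ β, z β ψ η * ℓ β η ψ

/-- Accumulated-loss matrix `M_j^{φψ} := α^{φ−ψ} m_j^ψ`. -/
noncomputable def MAcc {N : ℕ} (par : Fin (N + 1) → Fin (N + 1))
    (Φ : Fin (N + 1) → Finset (Fin 3))
    (z ℓ : Fin (N + 1) → Matrix (Fin 3) (Fin 3) ℂ)
    (j : Fin (N + 1)) (φ ψ : Fin 3) : ℂ :=
  alphaPh ^ ((φ.val : ℤ) - (ψ.val : ℤ)) * mAcc par Φ z ℓ j ψ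

section Helpers

variable {N : ℕ} {par : Fin (N + 1) → Fin (N + 1)} {dep : Fin (N + 1) → ℕ}
  {Φ : Fin (N + 1) → Finset (Fin 3)}

lemma dep_iter_le (hpar0 : par 0 = 0) (hdep : ∀ j : Fin (N + 1), j ≠ 0 → dep (par j) < dep j) :
    ∀ (n : ℕ) (β : Fin (N + 1)), dep (par^[n] β) ≤ dep β := by
  intro n
  induction n with
  | zero => intro β; simp
  | succ n ih =>
    intro β
    rw [Function.iterate_succ_apply]
    refine (ih (par β)).trans ?_
    by_cases hβ : β = 0
    · subst hβ; rw [hpar0]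
    · exact (hdep β hβ).le

lemma isAnc_dep_le (hpar0 : par 0 = 0) (hdep : ∀ j : Fin (N + 1), j ≠ 0 → dep (par j) < dep j)
    {i β : Fin (N + 1)} (h : isAnc par i β) : dep i ≤ dep β := by
  obtain ⟨n, rfl⟩ := h
  exact dep_iter_le hpar0 hdep n β

lemma Phi_iter (hpar0 : par 0 = 0) (hΦsub : ∀ j : Fin (N + 1), j ≠ 0 → Φ j ⊆ Φ (par j)) :
    ∀ (n : ℕ) (β : Fin (N + 1)), par^[n] β ≠ 0 → Φ β ⊆ Φ (par^[n] β) := by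
  intro n
  induction n with
  | zero => intro β _; simp
  | succ n ih =>
    intro β h
    rw [Function.iterate_succ_apply] at h ⊢
    have hβ : β ≠ 0 := by
      rintro rfl
      rw [hpar0, Function.iterate_fixed hpar0] at h
      exact h rfl
    exact (hΦsub β hβ).trans (ih (par β) h)

lemma isAnc_Phi_subset (hpar0 : par 0 = 0)
    (hΦsub : ∀ j : Fin (N + 1), j ≠ 0 → Φ j ⊆ Φ (par j))
    {i β : Fin (N + 1)} (h : isAnc par i β) (hi : i ≠ 0) : Φ β ⊆ Φ i := by
  obtain ⟨n, rfl⟩ := h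
  exact Phi_iter hpar0 hΦsub n β hi

lemma mem_subtree_isAnc {j β : Fin (N + 1)} (h : β ∈ subtree par j) : isAnc par j β := by
  rcases Finset.mem_insert.1 h with h | h
  · exact ⟨0, h⟩
  · exact ((Finset.mem_filter.1 h).2).2.2

lemma mem_subtree_ne_zero {j β : Fin (N + 1)} (hj : j ≠ 0) (h : β ∈ subtree par j) : β ≠ 0 := by
  rcases Finset.mem_insert.1 h with h | h
  · rw [h]; exact hj
  · exact ((Finset.mem_filter.1 h).2).1

lemma mem_children_iff {j k : Fin (N + 1)} :
    k ∈ children par j ↔ k ≠ 0 ∧ par k = j := by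
  simp [children]

lemma subtree_subset_down (hpar0 : par 0 = 0)
    (hdep : ∀ j : Fin (N + 1), j ≠ 0 → dep (par j) < dep j)
    {j k : Fin (N + 1)} (hj : j ≠ 0) (hk : k ∈ children par j) :
    subtree par k ⊆ down par j := by
  obtain ⟨hk0, hkp⟩ := mem_children_iff.1 hk
  intro β hβ
  have hanc : isAnc par k β := mem_subtree_isAnc hβ
  have hβ0 : β ≠ 0 := mem_subtree_ne_zero hk0 hβ
  obtain ⟨m, hm⟩ := hanc
  have hancj : isAnc par j β := ⟨m + 1, by rw [Function.iterate_succ_apply', hm, hkp]⟩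
  have hdk : dep j < dep β := by
    calc dep j < dep k := by rw [← hkp]; exact hdep k hk0
    _ ≤ dep β := isAnc_dep_le hpar0 hdep ⟨m, hm⟩
  have hβj : β ≠ j := fun h => absurd hdk (by rw [h]; exact lt_irrefl _)
  exact Finset.mem_filter.2 ⟨Finset.mem_univ _, hβ0, hβj, hancj⟩

lemma notMem_down_self {j : Fin (N + 1)} : j ∉ down par j := by
  intro h
  exact ((Finset.mem_filter.1 h).2).2.1 rfl

lemma card_subtree_lt (hpar0 : par 0 = 0)
    (hdep : ∀ j : Fin (N + 1), j ≠ 0 → dep (par j) < dep j)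
    {j k : Fin (N + 1)} (hj : j ≠ 0) (hk : k ∈ children par j) :
    (subtree par k).card < (subtree par j).card := by
  have h1 : (subtree par k).card ≤ (down par j).card :=
    Finset.card_le_card (subtree_subset_down hpar0 hdep hj hk)
  have h2 : (subtree par j).card = (down par j).card + 1 :=
    Finset.card_insert_of_notMem notMem_down_self
  omega

lemma subtree_decomp (hpar0 : par 0 = 0)
    (hdep : ∀ j : Fin (N + 1), j ≠ 0 → dep (par j) < dep j)
    {j : Fin (N + 1)} (hj : j ≠ 0) :
    subtree par j = insert j ((children par j).biUnion (fun k => subtree par k)) := by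
  ext β
  constructor
  · intro h
    rcases Finset.mem_insert.1 h with h | h
    · exact Finset.mem_insert.2 (Or.inl h)
    · obtain ⟨-, hβ0, hβj, n, hn⟩ := Finset.mem_filter.1 h
      match n, hn with
      | 0, hn => exact absurd hn hβj
      | (m + 1), hn =>
        rw [Function.iterate_succ_apply'] at hn
        set k := par^[m] β with hkdef
        have hk0 : k ≠ 0 := fun h0 => hj (by rw [← hn, h0, hpar0])
        have hkc : k ∈ children par j := mem_children_iff.2 ⟨hk0, hn⟩
        refine Finset.mem_insert_of_mem (Finset.mem_biUnion.2 ⟨k, hkc, ?_⟩)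
        by_cases hβk : β = k
        · rw [hβk]; exact Finset.mem_insert_self _ _
        · exact Finset.mem_insert_of_mem
            (Finset.mem_filter.2 ⟨Finset.mem_univ _, hβ0, hβk, ⟨m, rfl⟩⟩)
  · intro h
    rcases Finset.mem_insert.1 h with h | h
    · rw [h]; exact Finset.mem_insert_self _ _
    · obtain ⟨k, hkc, hβk⟩ := Finset.mem_biUnion.1 h
      exact Finset.mem_insert_of_mem (subtree_subset_down hpar0 hdep hj hkc hβk)

lemma subtree_disjoint (hpar0 : par 0 = 0)
    (hdep : ∀ j : Fin (N + 1), j ≠ 0 → dep (par j) < dep j)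
    {j k k' : Fin (N + 1)} (hk : k ∈ children par j) (hk' : k' ∈ children par j)
    (hne : k ≠ k') : Disjoint (subtree par k) (subtree par k') := by
  rw [Finset.disjoint_left]
  intro β h1 h2
  obtain ⟨m, hm⟩ := mem_subtree_isAnc h1
  obtain ⟨m', hm'⟩ := mem_subtree_isAnc h2
  have aux : ∀ (a b : Fin (N + 1)), a ∈ children par j → b ∈ children par j → a ≠ b →
      ∀ (p q : ℕ), p ≤ q → par^[p] β = a → par^[q] β = b → False := by
    intro a b ha hb hab p q hpq hp hq
    obtain ⟨ha0, hap⟩ := mem_children_iff.1 ha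
    obtain ⟨hb0, hbp⟩ := mem_children_iff.1 hb
    have hiter : par^[q - p] a = b := by
      rw [← hp, ← Function.iterate_add_apply, Nat.sub_add_cancel hpq, hq]
    match hqp : q - p, hiter with
    | 0, hiter => exact hab hiter
    | (r + 1), hiter =>
      rw [Function.iterate_succ_apply, hap] at hiter
      have h1 : dep b ≤ dep j := by rw [← hiter]; exact dep_iter_le hpar0 hdep r j
      have h2 : dep j < dep b := by rw [← hbp]; exact hdep b hb0
      omega
  rcases le_total m m' with h | h
  · exact aux k k' hk hk' hne m m' h hm hm'
  · exact aux k' k hk' hk hne.symm m' m h hm' hm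

lemma mAcc_eq_zero (hpar0 : par 0 = 0)
    (hΦsub : ∀ j : Fin (N + 1), j ≠ 0 → Φ j ⊆ Φ (par j))
    {z ℓ : Fin (N + 1) → Matrix (Fin 3) (Fin 3) ℂ}
    {k : Fin (N + 1)} {ψ : Fin 3} (hk : k ≠ 0) (hψ : ψ ∉ Φ k) :
    mAcc par Φ z ℓ k ψ = 0 := by
  apply Finset.sum_eq_zero
  intro β hβ
  obtain ⟨hβs, hβψ⟩ := Finset.mem_filter.1 hβ
  exact absurd (isAnc_Phi_subset hpar0 hΦsub (mem_subtree_isAnc hβs) hk hβψ) hψ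

lemma mAcc_rec (hpar0 : par 0 = 0)
    (hdep : ∀ j : Fin (N + 1), j ≠ 0 → dep (par j) < dep j)
    {z ℓ : Fin (N + 1) → Matrix (Fin 3) (Fin 3) ℂ}
    {j : Fin (N + 1)} {ψ : Fin 3} (hj : j ≠ 0) (hψ : ψ ∈ Φ j) :
    mAcc par Φ z ℓ j ψ
      = (∑ η ∈ Φ j, z j ψ η * ℓ j η ψ) + ∑ k ∈ children par j, mAcc par Φ z ℓ k ψ := by
  unfold mAcc
  rw [subtree_decomp hpar0 hdep hj, Finset.filter_insert, if_pos hψ]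
  have hjnot : j ∉ (((children par j).biUnion (fun k => subtree par k)).filter
      (fun β => ψ ∈ Φ β)) := by
    intro h
    obtain ⟨k, hkc, hjk⟩ := Finset.mem_biUnion.1 (Finset.mem_of_mem_filter _ h)
    exact notMem_down_self (subtree_subset_down hpar0 hdep hj hkc hjk)
  rw [Finset.sum_insert hjnot, Finset.filter_biUnion, Finset.sum_biUnion]
  intro a ha b hb hab
  exact Finset.disjoint_filter_filter (subtree_disjoint hpar0 hdep ha hb hab)

end Helpers

/-- Flow-error accumulation (key intermediate identity in the proof of Lemma 1):
the line-flow error of the lossless model relative to the lossy balanced-voltage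
model equals the negative of the accumulated downstream losses, and consequently
`Ŝ_j − S_j = −M_j`. -/
theorem flow_error_accumulation {N : ℕ} (hN : 1 ≤ N)
    (par : Fin (N + 1) → Fin (N + 1)) (dep : Fin (N + 1) → ℕ)
    (hpar0 : par 0 = 0)
    (hdep : ∀ j : Fin (N + 1), j ≠ 0 → dep (par j) < dep j)
    (Φ : Fin (N + 1) → Finset (Fin 3))
    (hΦne : ∀ j : Fin (N + 1), (Φ j).Nonempty)
    (hΦsub : ∀ j : Fin (N + 1), j ≠ 0 → Φ j ⊆ Φ (par j))
    (z ℓ : Fin (N + 1) → Matrix (Fin 3) (Fin 3) ℂ)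
    (s : Fin (N + 1) → Fin 3 → ℂ)
    -- lossy balanced-voltage model
    (v S : Fin (N + 1) → Matrix (Fin 3) (Fin 3) ℂ)
    (Λ : Fin (N + 1) → Fin 3 → ℂ)
    (hv : ∀ j : Fin (N + 1), j ≠ 0 → ∀ φ ∈ Φ j, ∀ ψ ∈ Φ j,
      v j φ ψ = v (par j) φ ψ
        - ((∑ η ∈ Φ j, S j φ η * (starRingEnd ℂ) (z j ψ η))
            + ∑ η ∈ Φ j, z j φ η * (starRingEnd ℂ) (S j ψ η))
        + ∑ η ∈ Φ j, ∑ κ ∈ Φ j, z j φ η * ℓ j η κ * (starRingEnd ℂ) (z j ψ κ))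
    (hS : ∀ j : Fin (N + 1), j ≠ 0 → ∀ φ ∈ Φ j, ∀ ψ ∈ Φ j,
      S j φ ψ = alphaPh ^ ((φ.val : ℤ) - (ψ.val : ℤ)) * Λ j ψ)
    (hΛ : ∀ j : Fin (N + 1), j ≠ 0 → ∀ ψ ∈ Φ j,
      Λ j ψ = (∑ k ∈ children par j, if ψ ∈ Φ k then Λ k ψ else 0)
        - s j ψ + ∑ η ∈ Φ j, z j ψ η * ℓ j η ψ)
    -- lossless linearized model
    (vhat Shat : Fin (N + 1) → Matrix (Fin 3) (Fin 3) ℂ)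
    (Λhat : Fin (N + 1) → Fin 3 → ℂ)
    (hvhat : ∀ j : Fin (N + 1), j ≠ 0 → ∀ φ ∈ Φ j, ∀ ψ ∈ Φ j,
      vhat j φ ψ = vhat (par j) φ ψ
        - ((∑ η ∈ Φ j, Shat j φ η * (starRingEnd ℂ) (z j ψ η))
            + ∑ η ∈ Φ j, z j φ η * (starRingEnd ℂ) (Shat j ψ η)))
    (hShat : ∀ j : Fin (N + 1), j ≠ 0 → ∀ φ ∈ Φ j, ∀ ψ ∈ Φ j,
      Shat j φ ψ = alphaPh ^ ((φ.val : ℤ) - (ψ.val : ℤ)) * Λhat j ψ)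
    (hΛhat : ∀ j : Fin (N + 1), j ≠ 0 → ∀ ψ ∈ Φ j,
      Λhat j ψ = (∑ k ∈ children par j, if ψ ∈ Φ k then Λhat k ψ else 0) - s j ψ) :
    ∀ j : Fin (N + 1), j ≠ 0 →
      (∀ ψ ∈ Φ j, Λhat j ψ - Λ j ψ = -(mAcc par Φ z ℓ j ψ)) ∧
      (∀ φ ∈ Φ j, ∀ ψ ∈ Φ j,
        Shat j φ ψ - S j φ ψ = -(MAcc par Φ z ℓ j φ ψ)) := by
  have key : ∀ n : ℕ, ∀ j : Fin (N + 1), j ≠ 0 → (subtree par j).card ≤ n →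
      ∀ ψ ∈ Φ j, Λhat j ψ - Λ j ψ = -(mAcc par Φ z ℓ j ψ) := by
    intro n
    induction n with
    | zero =>
      intro j hj hcard ψ hψ
      have : 0 < (subtree par j).card := Finset.card_pos.2 ⟨j, Finset.mem_insert_self _ _⟩
      omega
    | succ n ih =>
      intro j hj hcard ψ hψ
      have hsum : (∑ k ∈ children par j, if ψ ∈ Φ k then Λhat k ψ else 0)
          - (∑ k ∈ children par j, if ψ ∈ Φ k then Λ k ψ else 0)
          = -∑ k ∈ children par j, mAcc par Φ z ℓ k ψ := by
        rw [← Finset.sum_sub_distrib, ← Finset.sum_neg_distrib]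
        refine Finset.sum_congr rfl ?_
        intro k hk
        have hk0 : k ≠ 0 := (mem_children_iff.1 hk).1
        by_cases h : ψ ∈ Φ k
        · simp only [if_pos h]
          exact ih k hk0 (by have := card_subtree_lt hpar0 hdep hj hk; omega) ψ h
        · simp only [if_neg h]
          rw [mAcc_eq_zero hpar0 hΦsub hk0 h]; ring
      rw [hΛhat j hj ψ hψ, hΛ j hj ψ hψ, mAcc_rec hpar0 hdep hj hψ]
      linear_combination hsum
  intro j hj
  refine ⟨fun ψ hψ => key (subtree par j).card j hj le_rfl ψ hψ, ?_⟩
  intro φ hφ ψ hψ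
  rw [hShat j hj φ hφ ψ hψ, hS j hj φ hφ ψ hψ]
  unfold MAcc
  linear_combination (alphaPh ^ ((φ.val : ℤ) - (ψ.val : ℤ))) *
    key (subtree par j).card j hj le_rfl ψ hψ
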